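/- Fix natural numbers n ≥ 1, m with 1 ≤ m ≤ n, and a real ε with 0 ≤ ε < 1. Consider a single-bit delegation scheme (responses are single bits b ∈ {0,1}) whose family of target probabilities is given by IQP-circuit acceptance probabilities: for each x ∈ X there is a unitary V_x on (ℂ²)^{⊗n} and p x := p_{V_x}^{IQP,m}(1). Assume the scheme is ε-correct and blind. Fix x₀ ∈ X and a key k₀ in the support of K_{x₀}, and set a := E x₀ k₀. For x ∈ X define η(x) := Pr_{k ~ K_x}[E x k = a] and the acceptance probability p_acc(x) := Σ_k K_x(k) · [E x k = a] · Pr_{b ~ q_a}[D x k b = 1]. Then for every x ∈ X: η(x) > 0, and η(x)(1−ε)·(p x) ≤ p_acc(x) ≤ η(x)(1+ε)·(p x); consequently p_acc(x) > 0 whenever p x > 0, and p_acc(x) = 0 whenever p x = 0. (This is the reduction underlying Theorem 5, the impossibility result for blind delegation of IQP sampling.) -/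
import Mathlib


open Matrix

/-- The all-zeros computational basis state `|0^n⟩` of `n` qubits,
as a vector indexed by bit strings `Fin n → Fin 2`. -/
noncomputable def ketZeros (n : ℕ) : (Fin n → Fin 2) → ℂ :=
  fun z => if z = fun _ => 0 then 1 else 0

/-- The IQP acceptance probability
`p_V^{IQP,m}(1) = ‖(|1^m⟩⟨1^m| ⊗ I^{⊗(n−m)}) V |0^n⟩‖²`:
the squared norm of the projection of `V |0^n⟩` onto the subspace where the
first `m` qubits are all `1`. -/
noncomputable def iqpProb (n m : ℕ)
    (V : Matrix (Fin n → Fin 2) (Fin n → Fin 2) ℂ) : ℝ :=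
  ∑ z : Fin n → Fin 2,
    Complex.normSq
      (if ∀ i : Fin n, (i : ℕ) < m → z i = 1 then V.mulVec (ketZeros n) z else 0)

/-- A correct and blind single-bit classical delegation of IQP sampling yields a
nondeterministic-style acceptance criterion deciding positivity of `p_{V_x}^{IQP,m}(1)`:
for every input `x`, the probability `η x` of reproducing the fixed message `a` is
positive, and the acceptance probability `pacc x` is multiplicatively sandwiched
between `η x (1-ε) p x` and `η x (1+ε) p x`; hence `pacc x > 0` iff `p x > 0`. -/
theorem blind_iqp_delegation_single_bit
    (n m : ℕ) (hn : 1 ≤ n) (hm1 : 1 ≤ m) (hmn : m ≤ n)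
    (ε : ℝ) (hε0 : 0 ≤ ε) (hε1 : ε < 1)
    (X Key A : Type) [Fintype X] [Fintype Key] [Fintype A] [DecidableEq A]
    -- key generation distribution
    (K : X → Key → ℝ)
    (hKnn : ∀ x k, 0 ≤ K x k) (hKsum : ∀ x, ∑ k, K x k = 1)
    -- encryption
    (E : X → Key → A)
    -- server response distribution (responses are single bits)
    (q : A → Bool → ℝ)
    (hqnn : ∀ a b, 0 ≤ q a b) (hqsum : ∀ a, ∑ b, q a b = 1)
    -- decryption
    (D : X → Key → Bool → Bool)
    -- target probabilities: IQP acceptance probabilities of unitaries V_x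
    (V : X → Matrix (Fin n → Fin 2) (Fin n → Fin 2) ℂ)
    (hV : ∀ x, V x ∈ Matrix.unitaryGroup (Fin n → Fin 2) ℂ)
    (p : X → ℝ) (hp : ∀ x, p x = iqpProb n m (V x))
    -- ε-correctness, for every key in the support of K_x
    (hcorr1 : ∀ x k, 0 < K x k →
      |(∑ b, q (E x k) b * (if D x k b = true then 1 else 0)) - p x| ≤ ε * p x)
    (hcorr0 : ∀ x k, 0 < K x k →
      |(∑ b, q (E x k) b * (if D x k b = false then 1 else 0)) - (1 - p x)| ≤
        ε * (1 - p x))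
    -- blindness: supports of the pushforwards of K_x under E x coincide
    (hblind : ∀ x₁ x₂ a,
      (∃ k, 0 < K x₁ k ∧ E x₁ k = a) ↔ (∃ k, 0 < K x₂ k ∧ E x₂ k = a))
    -- a fixed input, key in its support, and resulting message
    (x₀ : X) (k₀ : Key) (hk₀ : 0 < K x₀ k₀) (a : A) (ha : a = E x₀ k₀)
    -- η and the acceptance probability
    (η pacc : X → ℝ)
    (hη : ∀ x, η x = ∑ k, K x k * (if E x k = a then 1 else 0))
    (hpacc : ∀ x, pacc x = ∑ k, K x k * (if E x k = a then 1 else 0) *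
      (∑ b, q a b * (if D x k b = true then 1 else 0))) :
    ∀ x, 0 < η x ∧
      (η x * (1 - ε) * p x ≤ pacc x ∧ pacc x ≤ η x * (1 + ε) * p x) ∧
      (0 < p x → 0 < pacc x) ∧ (p x = 0 → pacc x = 0) := by
  intro x
  obtain ⟨k₁, hk₁, hEk₁⟩ := (hblind x₀ x a).mp ⟨k₀, hk₀, ha.symm⟩
  have hηpos : 0 < η x := by
    rw [hη]
    refine Finset.sum_pos' (fun k _ => ?_) ⟨k₁, Finset.mem_univ _, ?_⟩
    · exact mul_nonneg (hKnn x k) (by split <;> norm_num)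
    · rw [hEk₁]; simpa using hk₁
  have key : ∀ k : Key,
      K x k * (if E x k = a then 1 else 0) * ((1 - ε) * p x)
        ≤ K x k * (if E x k = a then 1 else 0) *
          (∑ b, q a b * (if D x k b = true then 1 else 0)) ∧
      K x k * (if E x k = a then 1 else 0) *
          (∑ b, q a b * (if D x k b = true then 1 else 0))
        ≤ K x k * (if E x k = a then 1 else 0) * ((1 + ε) * p x) := by
    intro k
    by_cases hE : E x k = a
    · by_cases hK : 0 < K x k
      · have h1 := hcorr1 x k hK
        rw [hE] at h1
        obtain ⟨hl, hu⟩ := abs_le.mp h1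
        have hnn : 0 ≤ K x k * (if E x k = a then 1 else 0) :=
          mul_nonneg (hKnn x k) (by split <;> norm_num)
        constructor
        · exact mul_le_mul_of_nonneg_left (by linarith) hnn
        · exact mul_le_mul_of_nonneg_left (by linarith) hnn
      · have h0 : K x k = 0 := le_antisymm (not_lt.mp hK) (hKnn x k)
        simp [h0]
    · simp [hE]
  have hlow : η x * (1 - ε) * p x ≤ pacc x := by
    rw [hη, hpacc, mul_assoc, Finset.sum_mul]
    exact Finset.sum_le_sum fun k _ => (key k).1
  have hupp : pacc x ≤ η x * (1 + ε) * p x := by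
    rw [hη, hpacc, mul_assoc, Finset.sum_mul]
    exact Finset.sum_le_sum fun k _ => (key k).2
  refine ⟨hηpos, ⟨hlow, hupp⟩, fun hpx => ?_, fun hpx => ?_⟩
  · have := mul_pos (mul_pos hηpos (by linarith : (0:ℝ) < 1 - ε)) hpx
    linarith
  · rw [hpx] at hlow hupp
    nlinarith
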